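/- arXiv:1808.01263 — 7 statements merged into one kernel-verified Lean document; each statement's English description precedes it below -/
import Mathlib

section
/- Let n > 1 be a real number and W : ℝ → ℝ be continuously differentiable on [1,∞) with W'(1) = 0 and with W' differentiable at 1 (write W''(1) for its derivative there), and suppose λ ↦ W'(λ)/(λⁿ − 1) is integrable on (1,∞). Define P(c) = (1 + cⁿ)^{(n−1)/n} · ∫_{(1+cⁿ)^{1/n}}^{∞} W'(λ)/(λⁿ − 1) dλ for c > 0. If ∫₁^{∞} W'(λ)/(λⁿ − 1) dλ > W''(1)/(n(n−1)), then there exists δ > 0 such that for every c ∈ (0, δ), P is differentiable at c and its derivative is strictly positive (supercritical bifurcation). -/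
/-!
With `b = (1 + cⁿ)^{1/n}` and `T(b) = ∫_b^∞ W'(λ)/(λⁿ - 1) dλ` we have `P(c) = b^{n-1} T(b)`, so
`P'(c) = b'(c) b^{n-2} ((n - 1) T(b) - b W'(b)/(bⁿ - 1))` with `b'(c) > 0`.
As `c → 0⁺`, `b → 1⁺`, `T(b) → P₀` and, because `W'(1) = 0`, `W'(b)/(bⁿ - 1) → W''(1)/n` (a ratio
of difference quotients at `1`). The bracket thus tends to `(n - 1) P₀ - W''(1)/n`, which is
positive exactly when `P₀ > W''(1)/(n(n - 1))`.
-/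

open Real MeasureTheory Set Filter Topology

theorem tendsto_div_of_hasDerivAt_of_eq_zero {f g : ℝ → ℝ} {f' g' a : ℝ}
    (hf : HasDerivAt f f' a) (hg : HasDerivAt g g' a) (hfa : f a = 0) (hga : g a = 0)
    (hg' : g' ≠ 0) : Tendsto (fun x => f x / g x) (𝓝[≠] a) (𝓝 (f' / g')) := by
  refine ((hasDerivAt_iff_tendsto_slope.mp hf).div
    (hasDerivAt_iff_tendsto_slope.mp hg) hg').congr' ?_
  filter_upwards [self_mem_nhdsWithin] with x hx
  rw [Pi.div_apply, slope_def_field, slope_def_field, hfa, hga, sub_zero, sub_zero]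
  exact div_div_div_cancel_right₀ (sub_ne_zero.mpr hx) _ _

theorem tendsto_div_rpow_sub_one_nhdsNE_one {f : ℝ → ℝ} {f' n : ℝ} (hf : HasDerivAt f f' 1)
    (hf1 : f 1 = 0) (hn : n ≠ 0) :
    Tendsto (fun x => f x / (x ^ n - 1)) (𝓝[≠] 1) (𝓝 (f' / n)) := by
  have hpow : HasDerivAt (fun x : ℝ => x ^ n - 1) n 1 := by
    simpa using (hasDerivAt_rpow_const (x := 1) (p := n) (Or.inl one_ne_zero)).sub_const 1
  exact tendsto_div_of_hasDerivAt_of_eq_zero hf hpow hf1 (by simp) hn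

theorem continuousAt_deriv_div_rpow_sub_one {W : ℝ → ℝ} {n x : ℝ}
    (hW : ContDiffOn ℝ 1 W (Ici 1)) (hn : 0 < n) (hx : 1 < x) :
    ContinuousAt (fun l => deriv W l / (l ^ n - 1)) x :=
  ((hW.mono Ioi_subset_Ici_self).continuousOn_deriv_of_isOpen isOpen_Ioi le_rfl
    |>.continuousAt (Ioi_mem_nhds hx)).div
    ((continuousAt_id.rpow_const (Or.inr hn.le)).sub continuousAt_const)
    (sub_ne_zero.mpr (one_lt_rpow hx hn).ne')

theorem hasDerivAt_integral_Ioi {E : Type*} [NormedAddCommGroup E] [NormedSpace ℝ E]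
    [CompleteSpace E] {f : ℝ → E} {a x : ℝ} (hf : IntegrableOn f (Ioi a)) (hax : a < x)
    (hfx : ContinuousAt f x) : HasDerivAt (fun y => ∫ t in Ioi y, f t) (-f x) x := by
  have hsplit : (fun y => ∫ t in Ioi y, f t) =ᶠ[𝓝 x]
      fun y => (∫ t in Ioi a, f t) - ∫ t in a..y, f t := by
    filter_upwards [Ioi_mem_nhds hax] with y hy
    rw [← intervalIntegral.integral_Ioi_sub_Ioi hf hy.le, sub_sub_cancel]
  refine HasDerivAt.congr_of_eventuallyEq ?_ hsplit
  refine (intervalIntegral.integral_hasDerivAt_right ?_ ?_ hfx).const_sub _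
  · exact (intervalIntegrable_iff_integrableOn_Ioc_of_le hax.le).2
      (hf.mono_set Ioc_subset_Ioi_self)
  · exact ⟨Ioi a, Ioi_mem_nhds hax, hf.aestronglyMeasurable⟩

theorem hasDerivAt_rpow_mul {T : ℝ → ℝ} {m s T' : ℝ} (hs : 0 < s) (hT : HasDerivAt T T' s) :
    HasDerivAt (fun x => x ^ m * T x) (s ^ (m - 1) * (m * T s + s * T')) s := by
  refine ((hasDerivAt_rpow_const (p := m) (Or.inl hs.ne')).mul hT).congr_deriv ?_
  rw [rpow_sub_one hs.ne']
  field_simp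

/-- The outer radius `b` of the deformed unit ball with a cavity of radius `c`:
incompressibility forces `bⁿ = 1 + cⁿ`. -/
noncomputable def boundaryStretch (n c : ℝ) : ℝ := (1 + c ^ n) ^ (1 / n)

section boundaryStretch

variable {n c : ℝ}

theorem one_lt_boundaryStretch (hn : 0 < n) (hc : 0 < c) : 1 < boundaryStretch n c :=
  one_lt_rpow (lt_add_of_pos_right 1 (rpow_pos_of_pos hc n)) (one_div_pos.mpr hn)

theorem boundaryStretch_rpow_sub_one (hc : 0 ≤ c) :
    boundaryStretch n c ^ (n - 1) = (1 + c ^ n) ^ ((n - 1) / n) := by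
  rw [boundaryStretch, ← rpow_mul (by positivity), one_div_mul_eq_div]

theorem hasDerivAt_boundaryStretch (hn : n ≠ 0) (hc : 0 < c) :
    HasDerivAt (boundaryStretch n) (c ^ (n - 1) * (1 + c ^ n) ^ (1 / n - 1)) c := by
  have hu : 0 < 1 + c ^ n := by positivity
  refine (((hasDerivAt_rpow_const (p := n) (Or.inl hc.ne')).const_add 1).rpow_const
    (p := 1 / n) (Or.inl hu.ne')).congr_deriv ?_
  field_simp

theorem tendsto_boundaryStretch_nhdsGT_zero (hn : 0 < n) :
    Tendsto (boundaryStretch n) (𝓝[>] 0) (𝓝[>] 1) := by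
  refine tendsto_nhdsWithin_iff.mpr ⟨?_, eventually_nhdsWithin_of_forall
    fun c hc => one_lt_boundaryStretch hn hc⟩
  have hcont : ContinuousAt (boundaryStretch n) 0 :=
    (continuousAt_const.add (continuousAt_rpow_const 0 n (Or.inr hn.le))).rpow_const
      (Or.inr (one_div_pos.mpr hn).le)
  simpa [boundaryStretch, zero_rpow hn.ne'] using hcont.tendsto.mono_left nhdsWithin_le_nhds

theorem exists_hasDerivAt_boundaryStretch_rpow_mul_pos {T : ℝ → ℝ} {τ : ℝ} (hn : 0 < n)
    (hc : 0 < c) (hT : HasDerivAt T (-τ) (boundaryStretch n c))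
    (hpos : 0 < (n - 1) * T (boundaryStretch n c) - boundaryStretch n c * τ) :
    ∃ p, HasDerivAt (fun x => boundaryStretch n x ^ (n - 1) * T (boundaryStretch n x)) p c ∧
      0 < p := by
  have hb := zero_lt_one.trans (one_lt_boundaryStretch hn hc)
  refine ⟨_, (hasDerivAt_rpow_mul hb hT).comp c (hasDerivAt_boundaryStretch hn.ne' hc), ?_⟩
  rw [mul_neg, ← sub_eq_add_neg]
  exact mul_pos (mul_pos (rpow_pos_of_pos hb _) hpos)
    (mul_pos (rpow_pos_of_pos hc _) (rpow_pos_of_pos (by positivity) _))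

end boundaryStretch

/-- Supercritical cavitation: if the critical dead load exceeds W''(1)/(n(n-1)),
then the dead-load function P(c) has strictly positive derivative for all
sufficiently small cavity radii c > 0. -/
theorem supercritical_cavitation (n : ℝ) (hn : 1 < n) (W : ℝ → ℝ) (W'' : ℝ)
    (hW : ContDiffOn ℝ 1 W (Ici 1))
    (hW1 : deriv W 1 = 0)
    (hW2 : HasDerivAt (deriv W) W'' 1)
    (hInt : IntegrableOn (fun l => deriv W l / (l ^ n - 1)) (Ioi 1))
    (P : ℝ → ℝ)
    (hP : ∀ c : ℝ, 0 < c → P c = (1 + c ^ n) ^ ((n - 1) / n) *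
      ∫ l in Ioi ((1 + c ^ n) ^ (1 / n)), deriv W l / (l ^ n - 1))
    (hcrit : W'' / (n * (n - 1)) < ∫ l in Ioi (1 : ℝ), deriv W l / (l ^ n - 1)) :
    ∃ δ > 0, ∀ c ∈ Ioo (0 : ℝ) δ, ∃ p, HasDerivAt P p c ∧ 0 < p := by
  have hn0 : 0 < n := zero_lt_one.trans hn
  set g : ℝ → ℝ := fun l => deriv W l / (l ^ n - 1)
  set T : ℝ → ℝ := fun y => ∫ l in Ioi y, g l
  have hbracket : ∀ᶠ x in 𝓝[>] 1, 0 < (n - 1) * T x - x * g x := by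
    have hT : Tendsto T (𝓝[>] 1) (𝓝 (T 1)) :=
      hInt.continuousWithinAt_Ici_primitive_Ioi.tendsto.mono_left
        (nhdsWithin_mono _ Ioi_subset_Ici_self)
    have hg : Tendsto g (𝓝[>] 1) (𝓝 (W'' / n)) :=
      (tendsto_div_rpow_sub_one_nhdsNE_one hW2 hW1 hn0.ne').mono_left
        (nhdsWithin_mono _ fun x hx => ne_of_gt hx)
    refine ((hT.const_mul (n - 1)).sub ((tendsto_id.mono_left nhdsWithin_le_nhds).mul hg)
      ).eventually (eventually_gt_nhds ?_)
    rw [div_lt_iff₀ (by nlinarith)] at hcrit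
    rw [one_mul, sub_pos, div_lt_iff₀ hn0]
    linarith
  obtain ⟨δ, hδ, hδc⟩ := (nhdsGT_basis 0).eventually_iff.mp
    ((tendsto_boundaryStretch_nhdsGT_zero hn0).eventually hbracket)
  refine ⟨δ, hδ, fun c hc => ?_⟩
  have hb := one_lt_boundaryStretch hn0 hc.1
  have hPc : P =ᶠ[𝓝 c] fun x => boundaryStretch n x ^ (n - 1) * T (boundaryStretch n x) := by
    filter_upwards [Ioi_mem_nhds hc.1] with x hx
    rw [hP x hx, boundaryStretch_rpow_sub_one hx.le]
    rfl
  obtain ⟨p, hp, hp0⟩ := exists_hasDerivAt_boundaryStretch_rpow_mul_pos hn0 hc.1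
    (hasDerivAt_integral_Ioi hInt hb (continuousAt_deriv_div_rpow_sub_one hW hn0 hb)) (hδc hc)
  exact ⟨p, hp.congr_of_eventuallyEq hPc, hp0⟩
end

section
/- Let n > 1 be a real number and W : ℝ → ℝ be continuously differentiable on [1,∞) with W'(1) = 0 and with W' differentiable at 1 (write W''(1) for its derivative there), and suppose λ ↦ W'(λ)/(λⁿ − 1) is integrable on (1,∞). Define P(c) = (1 + cⁿ)^{(n−1)/n} · ∫_{(1+cⁿ)^{1/n}}^{∞} W'(λ)/(λⁿ − 1) dλ for c > 0. If ∫₁^{∞} W'(λ)/(λⁿ − 1) dλ < W''(1)/(n(n−1)), then there exists δ > 0 such that for every c ∈ (0, δ), P is differentiable at c and its derivative is strictly negative (subcritical bifurcation). -/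
/-!
With f(λ) = W'(λ)/(λⁿ - 1) and the deformed cavity radius r(c) = (1 + cⁿ)^(1/n), the load is
P(c) = G(r(c)) where G(s) = s^(n-1) ∫ₛ^∞ f. Since r is increasing with r(c) → 1⁺ as c → 0⁺,
P'(c) has the sign of G'(r(c)) = (n-1) r^(n-2) ∫ᵣ^∞ f - r^(n-1) f(r). As s → 1⁺ the tail
integral tends to P₀ and, by l'Hôpital at the common zero λ = 1 of W' and λⁿ - 1,
f(s) → W''(1)/n; so G'(s) → (n-1) P₀ - W''(1)/n, which is negative exactly when
P₀ < W''(1)/(n(n-1)).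
-/

open Real MeasureTheory Set Filter Topology

theorem hasDerivAt_setIntegral_Ioi {E : Type*} [NormedAddCommGroup E] [NormedSpace ℝ E]
    [CompleteSpace E] {f : ℝ → E} {a x : ℝ} (hf : IntegrableOn f (Ioi a)) (hax : a < x)
    (hmeas : StronglyMeasurableAtFilter f (𝓝 x)) (hcont : ContinuousAt f x) :
    HasDerivAt (fun y => ∫ t in Ioi y, f t) (-f x) x := by
  have hfx : IntegrableOn f (Ioi x) := hf.mono_set (Ioi_subset_Ioi hax.le)
  have hsplit : ∀ᶠ y in 𝓝 x, (∫ t in y..x, f t) + ∫ t in Ioi x, f t = ∫ t in Ioi y, f t := by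
    filter_upwards [Ioi_mem_nhds hax] with y hy
    rw [← intervalIntegral.integral_Ioi_sub_Ioi' (hf.mono_set (Ioi_subset_Ioi hy.le)) hfx,
      sub_add_cancel]
  have hint : IntervalIntegrable f volume x x := .refl
  exact ((intervalIntegral.integral_hasDerivAt_left hint hmeas hcont).add_const _)
    |>.congr_of_eventuallyEq (hsplit.mono fun _ h => h.symm)

theorem tendsto_div_of_hasDerivAt_of_eq_zero_s1 {𝕜 : Type*} [NontriviallyNormedField 𝕜]
    {g h : 𝕜 → 𝕜} {a b x : 𝕜} (hg : HasDerivAt g a x) (hh : HasDerivAt h b x)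
    (hgx : g x = 0) (hhx : h x = 0) (hb : b ≠ 0) :
    Tendsto (fun y => g y / h y) (𝓝[≠] x) (𝓝 (a / b)) := by
  refine ((hasDerivAt_iff_tendsto_slope.1 hg).div (hasDerivAt_iff_tendsto_slope.1 hh) hb).congr' ?_
  filter_upwards [self_mem_nhdsWithin] with y hy
  rw [Pi.div_apply, slope_def_field, slope_def_field, hgx, hhx, sub_zero, sub_zero,
    div_div_div_cancel_right₀ (sub_ne_zero.2 hy)]

theorem tendsto_div_rpow_sub_one_nhdsGT {g : ℝ → ℝ} {a n : ℝ} (hg : HasDerivAt g a 1)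
    (hg1 : g 1 = 0) (hn : n ≠ 0) :
    Tendsto (fun l => g l / (l ^ n - 1)) (𝓝[>] 1) (𝓝 (a / n)) := by
  have hpow : HasDerivAt (fun l : ℝ => l ^ n - 1) n 1 := by
    simpa using (hasDerivAt_rpow_const (x := 1) (p := n) (Or.inl one_ne_zero)).sub_const 1
  exact (tendsto_div_of_hasDerivAt_of_eq_zero_s1 hg hpow hg1 (by simp) hn).mono_left
    (nhdsWithin_mono _ fun _ hy => ne_of_gt hy)

theorem continuousOn_deriv_div_rpow_sub_one {W : ℝ → ℝ} {n : ℝ} (hW : ContDiffOn ℝ 1 W (Ici 1))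
    (hn : 0 < n) : ContinuousOn (fun l => deriv W l / (l ^ n - 1)) (Ioi 1) := by
  refine ((hW.mono Ioi_subset_Ici_self).continuousOn_deriv_of_isOpen isOpen_Ioi le_rfl).div
    (fun x hx => ?_) fun x hx => ?_
  · exact ((continuousAt_rpow_const x n (Or.inl (by linarith [mem_Ioi.1 hx]))).sub
      continuousAt_const).continuousWithinAt
  · exact sub_ne_zero.2 (one_lt_rpow (mem_Ioi.1 hx) hn).ne'

theorem hasDerivAt_one_add_rpow_rpow {n c : ℝ} (hn : n ≠ 0) (hc : 0 < c) :
    HasDerivAt (fun c => (1 + c ^ n) ^ (1 / n)) ((1 + c ^ n) ^ (1 / n - 1) * c ^ (n - 1)) c := by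
  have h := (hasDerivAt_rpow_const (p := 1 / n) (Or.inl (by positivity : 1 + c ^ n ≠ 0))).comp c
    ((hasDerivAt_rpow_const (p := n) (Or.inl hc.ne')).const_add 1)
  refine h.congr_deriv ?_
  field_simp

theorem tendsto_one_add_rpow_rpow_nhdsGT_zero {n : ℝ} (hn : 0 < n) :
    Tendsto (fun c : ℝ => (1 + c ^ n) ^ (1 / n)) (𝓝[>] 0) (𝓝[>] 1) := by
  refine tendsto_nhdsWithin_iff.2 ⟨?_, ?_⟩
  · have hcont : ContinuousAt (fun c : ℝ => (1 + c ^ n) ^ (1 / n)) 0 :=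
      ((continuousAt_rpow_const 0 n (Or.inr hn.le)).const_add 1).rpow_const
        (Or.inl (by simp [hn.ne']))
    simpa [zero_rpow hn.ne'] using hcont.tendsto.mono_left nhdsWithin_le_nhds
  · filter_upwards [self_mem_nhdsWithin] with c hc
    exact one_lt_rpow (lt_add_of_pos_right 1 (rpow_pos_of_pos hc n)) (by positivity)

theorem hasDerivAt_rpow_mul_setIntegral_Ioi {f : ℝ → ℝ} {a s : ℝ} (m : ℝ)
    (hf : IntegrableOn f (Ioi a)) (ha : 0 ≤ a) (has : a < s)
    (hmeas : StronglyMeasurableAtFilter f (𝓝 s)) (hcont : ContinuousAt f s) :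
    HasDerivAt (fun s => s ^ m * ∫ t in Ioi s, f t)
      (m * s ^ (m - 1) * (∫ t in Ioi s, f t) - s ^ m * f s) s := by
  refine ((hasDerivAt_rpow_const (p := m) (Or.inl (by linarith))).mul
    (hasDerivAt_setIntegral_Ioi hf has hmeas hcont)).congr_deriv ?_
  ring

theorem tendsto_rpow_mul_setIntegral_Ioi_sub_nhdsGT_one {f : ℝ → ℝ} {L : ℝ} (m : ℝ)
    (hf : IntegrableOn f (Ioi 1)) (hL : Tendsto f (𝓝[>] 1) (𝓝 L)) :
    Tendsto (fun s => m * s ^ (m - 1) * (∫ t in Ioi s, f t) - s ^ m * f s) (𝓝[>] 1)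
      (𝓝 (m * (∫ t in Ioi 1, f t) - L)) := by
  have hpow (p : ℝ) : Tendsto (fun s : ℝ => s ^ p) (𝓝[>] 1) (𝓝 1) := by
    simpa using (continuousAt_rpow_const 1 p (Or.inl one_ne_zero)).tendsto.mono_left
      nhdsWithin_le_nhds
  have htail : Tendsto (fun s => ∫ t in Ioi s, f t) (𝓝[>] 1) (𝓝 (∫ t in Ioi 1, f t)) :=
    hf.continuousWithinAt_Ici_primitive_Ioi.mono_left (nhdsWithin_mono _ Ioi_subset_Ici_self)
  simpa using ((tendsto_const_nhds (x := m)).mul (hpow (m - 1)) |>.mul htail).sub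
    ((hpow m).mul hL)

/-- Subcritical cavitation: if the critical dead load is less than W''(1)/(n(n-1)),
then the dead-load function P(c) has strictly negative derivative for all
sufficiently small cavity radii c > 0. -/
theorem subcritical_cavitation (n : ℝ) (hn : 1 < n) (W : ℝ → ℝ) (W'' : ℝ)
    (hW : ContDiffOn ℝ 1 W (Ici 1))
    (hW1 : deriv W 1 = 0)
    (hW2 : HasDerivAt (deriv W) W'' 1)
    (hInt : IntegrableOn (fun l => deriv W l / (l ^ n - 1)) (Ioi 1))
    (P : ℝ → ℝ)
    (hP : ∀ c : ℝ, 0 < c → P c = (1 + c ^ n) ^ ((n - 1) / n) *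
      ∫ l in Ioi ((1 + c ^ n) ^ (1 / n)), deriv W l / (l ^ n - 1))
    (hcrit : (∫ l in Ioi (1 : ℝ), deriv W l / (l ^ n - 1)) < W'' / (n * (n - 1))) :
    ∃ δ > 0, ∀ c ∈ Ioo (0 : ℝ) δ, ∃ p, HasDerivAt P p c ∧ p < 0 := by
  have hn0 : 0 < n := by linarith
  set f := fun l : ℝ => deriv W l / (l ^ n - 1)
  set r := fun c : ℝ => (1 + c ^ n) ^ (1 / n)
  set G' := fun s : ℝ => (n - 1) * s ^ (n - 1 - 1) * (∫ l in Ioi s, f l) - s ^ (n - 1) * f s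
  have hf := continuousOn_deriv_div_rpow_sub_one hW hn0
  have hG'_neg : ∀ᶠ s in 𝓝[>] 1, G' s < 0 := by
    refine (tendsto_rpow_mul_setIntegral_Ioi_sub_nhdsGT_one (n - 1) hInt
      (tendsto_div_rpow_sub_one_nhdsGT hW2 hW1 hn0.ne')).eventually_lt_const (sub_neg.2 ?_)
    calc (n - 1) * ∫ l in Ioi 1, f l < (n - 1) * (W'' / (n * (n - 1))) :=
          mul_lt_mul_of_pos_left hcrit (by linarith)
      _ = W'' / n := by field_simp [(by linarith : n - 1 ≠ 0)]
  have hPr : ∀ c, 0 < c → P c = r c ^ (n - 1) * ∫ l in Ioi (r c), f l := fun c hc => by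
    rw [hP c hc, ← rpow_mul (by positivity), one_div_mul_eq_div]
  have hr := tendsto_one_add_rpow_rpow_nhdsGT_zero hn0
  have hPderiv : ∀ᶠ c in 𝓝[>] 0, ∃ p, HasDerivAt P p c ∧ p < 0 := by
    filter_upwards [hr.eventually hG'_neg, hr.eventually self_mem_nhdsWithin,
      self_mem_nhdsWithin] with c hneg (hr1 : 1 < r c) (hc : 0 < c)
    refine ⟨G' (r c) * ((1 + c ^ n) ^ (1 / n - 1) * c ^ (n - 1)), ?_,
      mul_neg_of_neg_of_pos hneg (by positivity)⟩
    have hG := hasDerivAt_rpow_mul_setIntegral_Ioi (n - 1) hInt zero_le_one hr1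
      (hf.stronglyMeasurableAtFilter isOpen_Ioi _ hr1) (hf.continuousAt (Ioi_mem_nhds hr1))
    refine (hG.comp c (hasDerivAt_one_add_rpow_rpow hn0.ne' hc)).congr_of_eventuallyEq ?_
    filter_upwards [Ioi_mem_nhds hc] with x hx using hPr x hx
  exact mem_nhdsGT_iff_exists_Ioo_subset.1 hPderiv
end

section
/- For every real number m, the function λ ↦ (λ^{2m−1} − λ^{−4m−1})/(λ³ − 1) is integrable on the interval (1, ∞) if and only if −3/4 < m < 3/2. -/
open Real MeasureTheory Set Filter

private lemma rpow_le_two_rpow_abs {t c : ℝ} (h1 : 1 ≤ t) (h2 : t ≤ 2) :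
    t ^ c ≤ 2 ^ |c| := by
  have h0 : (1:ℝ) ≤ 2 ^ |c| := by
    have := Real.rpow_le_rpow_of_exponent_le one_le_two (abs_nonneg c)
    simpa using this
  rcases le_or_gt 0 c with hc | hc
  · calc t ^ c ≤ 2 ^ c := Real.rpow_le_rpow (by linarith) h2 hc
      _ ≤ 2 ^ |c| := Real.rpow_le_rpow_of_exponent_le one_le_two (le_abs_self c)
  · exact (Real.rpow_le_one_of_one_le_of_nonpos h1 hc.le).trans h0

private lemma abs_rpow_sub_one_le {c x : ℝ} (h1 : 1 ≤ x) (h2 : x ≤ 2) :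
    |x ^ c - 1| ≤ |c| * 2 ^ |c - 1| * (x - 1) := by
  have key := Convex.norm_image_sub_le_of_norm_hasDerivWithin_le
    (f := fun t : ℝ => t ^ c) (f' := fun t : ℝ => c * t ^ (c - 1))
    (C := |c| * 2 ^ |c - 1|)
    (fun t ht => (Real.hasDerivAt_rpow_const
      (Or.inl (ne_of_gt (lt_of_lt_of_le zero_lt_one ht.1)))).hasDerivWithinAt)
    (fun t ht => by
      rw [Real.norm_eq_abs, abs_mul, abs_of_nonneg (Real.rpow_nonneg (by linarith [ht.1]) _)]
      exact mul_le_mul_of_nonneg_left (rpow_le_two_rpow_abs ht.1 ht.2) (abs_nonneg c))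
    (convex_Icc (1:ℝ) 2) (⟨le_refl 1, one_le_two⟩ : (1:ℝ) ∈ Icc (1:ℝ) 2) ⟨h1, h2⟩
  simpa [Real.norm_eq_abs, abs_of_nonneg (sub_nonneg.2 h1)] using key

private lemma meas_f (m : ℝ) :
    Measurable (fun l : ℝ => (l ^ (2 * m - 1) - l ^ (-(4 * m) - 1)) / (l ^ (3 : ℕ) - 1)) := by
  fun_prop

private lemma int_Ioc (m : ℝ) :
    IntegrableOn
      (fun l : ℝ => (l ^ (2 * m - 1) - l ^ (-(4 * m) - 1)) / (l ^ (3 : ℕ) - 1))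
      (Ioc 1 2) := by
  apply Measure.integrableOn_of_bounded
    (M := 2 ^ |(-(4 * m) - 1)| * (|6 * m| * 2 ^ |6 * m - 1|))
  · exact measure_Ioc_lt_top.ne
  · exact (meas_f m).aestronglyMeasurable
  · filter_upwards [ae_restrict_mem measurableSet_Ioc] with l hl
    obtain ⟨hl1, hl2⟩ := hl
    have hl0 : (0:ℝ) < l := lt_trans zero_lt_one hl1
    have hden0 : 0 < l ^ (3:ℕ) - 1 := by nlinarith [sq_nonneg l, sq_nonneg (l-1), mul_pos (sub_pos.2 hl1) hl0]
    have hden1 : l - 1 ≤ l ^ (3:ℕ) - 1 := by nlinarith [mul_nonneg (mul_nonneg (sub_nonneg.2 hl1.le) hl0.le) (by linarith : (0:ℝ) ≤ l + 1)]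
    have hfac : l ^ (2 * m - 1) - l ^ (-(4 * m) - 1)
        = l ^ (-(4 * m) - 1) * (l ^ (6 * m) - 1) := by
      rw [mul_sub, ← Real.rpow_add hl0, mul_one]
      ring_nf
    have hnum : |l ^ (2 * m - 1) - l ^ (-(4 * m) - 1)|
        ≤ 2 ^ |(-(4 * m) - 1)| * (|6 * m| * 2 ^ |6 * m - 1| * (l - 1)) := by
      rw [hfac, abs_mul, abs_of_nonneg (Real.rpow_nonneg hl0.le _)]
      exact mul_le_mul (rpow_le_two_rpow_abs hl1.le hl2)
        (abs_rpow_sub_one_le hl1.le hl2) (abs_nonneg _)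
        (Real.rpow_nonneg (by norm_num) _)
    have hC : (0:ℝ) ≤ 2 ^ |(-(4 * m) - 1)| * (|6 * m| * 2 ^ |6 * m - 1|) := by positivity
    rw [Real.norm_eq_abs, abs_div, abs_of_pos hden0, div_le_iff₀ hden0]
    calc |l ^ (2 * m - 1) - l ^ (-(4 * m) - 1)|
        ≤ 2 ^ |(-(4 * m) - 1)| * (|6 * m| * 2 ^ |6 * m - 1|) * (l - 1) := by
          rw [mul_assoc]; exact hnum
      _ ≤ 2 ^ |(-(4 * m) - 1)| * (|6 * m| * 2 ^ |6 * m - 1|) * (l ^ (3:ℕ) - 1) :=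
          mul_le_mul_of_nonneg_left hden1 hC

private lemma rpow_div_cube {l a : ℝ} (hl0 : 0 < l) :
    l ^ (a - 3) = l ^ a / l ^ (3:ℕ) := by
  rw [← Real.rpow_natCast l 3, ← Real.rpow_sub hl0]
  norm_num

private lemma int_Ioi2 (m : ℝ) (h1 : -3/4 < m) (h2 : m < 3/2) :
    IntegrableOn
      (fun l : ℝ => (l ^ (2 * m - 1) - l ^ (-(4 * m) - 1)) / (l ^ (3 : ℕ) - 1))
      (Ioi 2) := by
  have g_int : IntegrableOn
      (fun l : ℝ => 2 * l ^ (2 * m - 4) + 2 * l ^ (-(4 * m) - 4)) (Ioi 2) := by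
    apply Integrable.add
    · exact ((integrableOn_Ioi_rpow_iff two_pos).2 (by linarith)).const_mul 2
    · exact ((integrableOn_Ioi_rpow_iff two_pos).2 (by linarith)).const_mul 2
  apply g_int.mono' (meas_f m).aestronglyMeasurable
  filter_upwards [ae_restrict_mem measurableSet_Ioi] with l hl
  have hl2 : (2:ℝ) < l := hl
  have hl0 : (0:ℝ) < l := by linarith
  have h8 : (8:ℝ) ≤ l ^ (3:ℕ) := by nlinarith [sq_nonneg l, sq_nonneg (l-2)]
  have hden0 : 0 < l ^ (3:ℕ) - 1 := by linarith
  have hdenh : l ^ (3:ℕ) / 2 ≤ l ^ (3:ℕ) - 1 := by linarith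
  have hnum : |l ^ (2 * m - 1) - l ^ (-(4 * m) - 1)|
      ≤ l ^ (2 * m - 1) + l ^ (-(4 * m) - 1) := by
    refine (abs_sub _ _).trans ?_
    rw [abs_of_nonneg (Real.rpow_nonneg hl0.le _), abs_of_nonneg (Real.rpow_nonneg hl0.le _)]
  have hkey : (l ^ (2 * m - 1) + l ^ (-(4 * m) - 1)) / (l ^ (3:ℕ) / 2)
      = 2 * l ^ (2 * m - 4) + 2 * l ^ (-(4 * m) - 4) := by
    have e1 : l ^ (2 * m - 4) = l ^ (2 * m - 1) / l ^ (3:ℕ) := by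
      rw [show (2 * m - 4) = (2 * m - 1) - 3 by ring]; exact rpow_div_cube hl0
    have e2 : l ^ (-(4 * m) - 4) = l ^ (-(4 * m) - 1) / l ^ (3:ℕ) := by
      rw [show (-(4 * m) - 4) = (-(4 * m) - 1) - 3 by ring]; exact rpow_div_cube hl0
    have h3 : (l:ℝ) ^ (3:ℕ) ≠ 0 := by positivity
    rw [e1, e2]; field_simp
  rw [Real.norm_eq_abs, abs_div, abs_of_pos hden0, ← hkey]
  exact div_le_div₀ (by positivity) hnum (by positivity) hdenh

private lemma four_le_rpow {l c : ℝ} (hl : 2 ≤ l) (hc : 2 ≤ c) : (4:ℝ) ≤ l ^ c := by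
  have h1 : (4:ℝ) = 2 ^ ((2:ℕ):ℝ) := by
    rw [Real.rpow_natCast]; norm_num
  calc (4:ℝ) = 2 ^ ((2:ℕ):ℝ) := h1
    _ ≤ 2 ^ c := Real.rpow_le_rpow_of_exponent_le one_le_two (by push_cast; linarith)
    _ ≤ l ^ c := Real.rpow_le_rpow (by norm_num) hl (by linarith)

private lemma not_int_hi (m : ℝ) (hm : 3/2 ≤ m)
    (h : IntegrableOn
      (fun l : ℝ => (l ^ (2 * m - 1) - l ^ (-(4 * m) - 1)) / (l ^ (3 : ℕ) - 1))
      (Ioi 2)) : False := by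
  have hint : IntegrableOn (fun l : ℝ => l ^ (2 * m - 4)) (Ioi 2) := by
    apply (h.const_mul 2).mono'
      ((by fun_prop : Measurable fun l : ℝ => l ^ (2 * m - 4)).aestronglyMeasurable)
    filter_upwards [ae_restrict_mem measurableSet_Ioi] with l hl
    have hl2 : (2:ℝ) < l := hl
    have hl0 : (0:ℝ) < l := by linarith
    have h8 : (8:ℝ) ≤ l ^ (3:ℕ) := by nlinarith [sq_nonneg l, sq_nonneg (l-2)]
    have hden0 : 0 < l ^ (3:ℕ) - 1 := by linarith
    have ha : (4:ℝ) ≤ l ^ (2 * m - 1) := four_le_rpow hl2.le (by linarith)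
    have hb : l ^ (-(4 * m) - 1) ≤ 1 :=
      Real.rpow_le_one_of_one_le_of_nonpos (by linarith) (by linarith)
    have hnum : (1/2) * l ^ (2 * m - 1) ≤ l ^ (2 * m - 1) - l ^ (-(4 * m) - 1) := by
      linarith
    have hstep : (1/2) * l ^ (2 * m - 4)
        ≤ (l ^ (2 * m - 1) - l ^ (-(4 * m) - 1)) / (l ^ (3:ℕ) - 1) := by
      have e1 : (1/2) * l ^ (2 * m - 4) = ((1/2) * l ^ (2 * m - 1)) / l ^ (3:ℕ) := by
        rw [show (2 * m - 4) = (2 * m - 1) - 3 by ring, rpow_div_cube hl0]; ring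
      rw [e1]
      exact div_le_div₀ (by linarith) hnum hden0 (by linarith)
    rw [Real.norm_eq_abs, abs_of_nonneg (Real.rpow_nonneg hl0.le _)]
    linarith
  rw [integrableOn_Ioi_rpow_iff two_pos] at hint
  linarith

private lemma not_int_lo (m : ℝ) (hm : m ≤ -3/4)
    (h : IntegrableOn
      (fun l : ℝ => (l ^ (2 * m - 1) - l ^ (-(4 * m) - 1)) / (l ^ (3 : ℕ) - 1))
      (Ioi 2)) : False := by
  have hint : IntegrableOn (fun l : ℝ => l ^ (-(4 * m) - 4)) (Ioi 2) := by
    apply ((h.neg).const_mul 2).mono'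
      ((by fun_prop : Measurable fun l : ℝ => l ^ (-(4 * m) - 4)).aestronglyMeasurable)
    filter_upwards [ae_restrict_mem measurableSet_Ioi] with l hl
    have hl2 : (2:ℝ) < l := hl
    have hl0 : (0:ℝ) < l := by linarith
    have h8 : (8:ℝ) ≤ l ^ (3:ℕ) := by nlinarith [sq_nonneg l, sq_nonneg (l-2)]
    have hden0 : 0 < l ^ (3:ℕ) - 1 := by linarith
    have ha : (4:ℝ) ≤ l ^ (-(4 * m) - 1) := four_le_rpow hl2.le (by linarith)
    have hb : l ^ (2 * m - 1) ≤ 1 :=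
      Real.rpow_le_one_of_one_le_of_nonpos (by linarith) (by linarith)
    have hnum : (1/2) * l ^ (-(4 * m) - 1) ≤ l ^ (-(4 * m) - 1) - l ^ (2 * m - 1) := by
      linarith
    have hstep : (1/2) * l ^ (-(4 * m) - 4)
        ≤ (l ^ (-(4 * m) - 1) - l ^ (2 * m - 1)) / (l ^ (3:ℕ) - 1) := by
      have e1 : (1/2) * l ^ (-(4 * m) - 4) = ((1/2) * l ^ (-(4 * m) - 1)) / l ^ (3:ℕ) := by
        rw [show (-(4 * m) - 4) = (-(4 * m) - 1) - 3 by ring, rpow_div_cube hl0]; ring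
      rw [e1]
      exact div_le_div₀ (by linarith) hnum hden0 (by linarith)
    rw [Real.norm_eq_abs, abs_of_nonneg (Real.rpow_nonneg hl0.le _)]
    have : -((l ^ (2 * m - 1) - l ^ (-(4 * m) - 1)) / (l ^ (3:ℕ) - 1))
        = (l ^ (-(4 * m) - 1) - l ^ (2 * m - 1)) / (l ^ (3:ℕ) - 1) := by
      rw [← neg_div, neg_sub]
    simp only [Pi.neg_apply]
    rw [this]
    linarith
  rw [integrableOn_Ioi_rpow_iff two_pos] at hint
  linarith

/-- Integrability criterion for the cavitation integrand of the one-term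
power-law material with exponent 2m: the critical dead-load integral is finite
if and only if −3/4 < m < 3/2. -/
theorem cavitation_integrability_iff (m : ℝ) :
    IntegrableOn
      (fun l : ℝ => (l ^ (2 * m - 1) - l ^ (-(4 * m) - 1)) / (l ^ (3 : ℕ) - 1))
      (Ioi 1)
      ↔ -3/4 < m ∧ m < 3/2 := by
  constructor
  · intro h
    have h2 := h.mono_set (Ioi_subset_Ioi one_le_two)
    constructor
    · by_contra hc
      exact not_int_lo m (not_lt.1 hc) h2
    · by_contra hc
      exact not_int_hi m (not_lt.1 hc) h2
  · rintro ⟨h1, h2⟩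
    have := (int_Ioc m).union (int_Ioi2 m h1 h2)
    rwa [Ioc_union_Ioi_eq_Ioi one_le_two] at this
end

section
/- Let μ₁, μ₂ be real numbers and W : ℝ → ℝ be given by W(λ) = (μ₁/2)(λ⁻⁴ + 2λ² − 3) + 2μ₂(λ² + 2λ⁻¹ − 3). Then for every t > 1 the function λ ↦ W'(λ)/(λ³ − 1) is integrable on (t, ∞) and t² ∫_{t}^{∞} W'(λ)/(λ³ − 1) dλ = 2μ₁(t + t⁻²/4) + 4μ₂ t. -/
open Real MeasureTheory Set Filter

/-!
The two brackets of W'(λ) = 2μ₁(λ - λ⁻⁵) + 4μ₂(λ - λ⁻²) are both divisible by λ³ - 1, since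
λ - λ⁻⁵ = λ⁻⁵(λ³ - 1)(λ³ + 1) and λ - λ⁻² = λ⁻²(λ³ - 1). The integrand is therefore the Laurent
polynomial 2μ₁(λ⁻² + λ⁻⁵) + 4μ₂λ⁻², which is integrated on (t, ∞) term by term.
-/

theorem integrableOn_Ioi_zpow_of_lt {m : ℤ} (hm : m < -1) {c : ℝ} (hc : 0 < c) :
    IntegrableOn (fun x : ℝ => x ^ m) (Ioi c) := by
  simpa only [rpow_intCast] using integrableOn_Ioi_rpow_of_lt (a := m) (by exact_mod_cast hm) hc

theorem integral_Ioi_zpow_of_lt {m : ℤ} (hm : m < -1) {c : ℝ} (hc : 0 < c) :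
    ∫ x in Ioi c, x ^ m = -c ^ (m + 1) / (m + 1) := by
  have h := integral_Ioi_rpow_of_lt (a := m) (by exact_mod_cast hm) hc
  rw [← Int.cast_one, ← Int.cast_add, rpow_intCast] at h
  simpa only [rpow_intCast, Int.cast_add, Int.cast_one] using h

noncomputable def twoTermEnergy (μ₁ μ₂ l : ℝ) : ℝ :=
  μ₁ / 2 * (l ^ (-4 : ℤ) + 2 * l ^ 2 - 3) + 2 * μ₂ * (l ^ 2 + 2 * l⁻¹ - 3)

theorem hasDerivAt_twoTermEnergy (μ₁ μ₂ : ℝ) {l : ℝ} (hl : l ≠ 0) :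
    HasDerivAt (twoTermEnergy μ₁ μ₂)
      (2 * μ₁ * (l - l ^ (-5 : ℤ)) + 4 * μ₂ * (l - l ^ (-2 : ℤ))) l := by
  have hzpow := hasDerivAt_zpow (-4) l (Or.inl hl)
  have hsq := hasDerivAt_pow 2 l
  have hinv := hasDerivAt_inv hl
  refine ((((hzpow.add (hsq.const_mul 2)).sub_const 3).const_mul (μ₁ / 2)).add
    (((hsq.add (hinv.const_mul 2)).sub_const 3).const_mul (2 * μ₂))).congr_deriv ?_
  norm_num [zpow_neg]
  field_simp
  ring

theorem deriv_twoTermEnergy_div (μ₁ μ₂ : ℝ) {l : ℝ} (hl : l ≠ 0) (hl3 : l ^ 3 ≠ 1) :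
    deriv (twoTermEnergy μ₁ μ₂) l / (l ^ 3 - 1)
      = 2 * μ₁ * (l ^ (-2 : ℤ) + l ^ (-5 : ℤ)) + 4 * μ₂ * l ^ (-2 : ℤ) := by
  rw [(hasDerivAt_twoTermEnergy μ₁ μ₂ hl).deriv, div_eq_iff (sub_ne_zero.mpr hl3)]
  simp only [zpow_neg, zpow_ofNat]
  field_simp
  ring

/-- Closed form of the dead load sustaining a cavity, for the two-term model
with exponents m = 1, n = −1/2: for every t > 1, the cavitation integrand is
integrable on (t, ∞) and t² ∫ₜ^∞ W'(λ)/(λ³−1) dλ = 2μ₁(t + t⁻²/4) + 4μ₂t. -/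
theorem deadload_closed_form (μ₁ μ₂ : ℝ) (W : ℝ → ℝ)
    (hW : ∀ l : ℝ, W l = μ₁ / 2 * (l ^ (-4 : ℤ) + 2 * l ^ 2 - 3)
        + 2 * μ₂ * (l ^ 2 + 2 * l⁻¹ - 3)) :
    ∀ t : ℝ, 1 < t →
      IntegrableOn (fun l => deriv W l / (l ^ 3 - 1)) (Ioi t) ∧
      t ^ 2 * ∫ l in Ioi t, deriv W l / (l ^ 3 - 1) =
        2 * μ₁ * (t + t ^ (-2 : ℤ) / 4) + 4 * μ₂ * t := by
  intro t ht
  obtain rfl : W = twoTermEnergy μ₁ μ₂ := funext hW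
  have ht0 : 0 < t := one_pos.trans ht
  have hreduce : EqOn (fun l => deriv (twoTermEnergy μ₁ μ₂) l / (l ^ 3 - 1))
      (fun l => 2 * μ₁ * (l ^ (-2 : ℤ) + l ^ (-5 : ℤ)) + 4 * μ₂ * l ^ (-2 : ℤ)) (Ioi t) :=
    fun l hl => deriv_twoTermEnergy_div μ₁ μ₂ (ht0.trans hl).ne'
      (one_lt_pow₀ (ht.trans hl) three_ne_zero).ne'
  have hi2 := integrableOn_Ioi_zpow_of_lt (m := -2) (by norm_num) ht0
  have hi5 := integrableOn_Ioi_zpow_of_lt (m := -5) (by norm_num) ht0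
  have hi25 : IntegrableOn (fun l : ℝ => l ^ (-2 : ℤ) + l ^ (-5 : ℤ)) (Ioi t) := hi2.add hi5
  have hint : IntegrableOn
      (fun l : ℝ => 2 * μ₁ * (l ^ (-2 : ℤ) + l ^ (-5 : ℤ)) + 4 * μ₂ * l ^ (-2 : ℤ)) (Ioi t) :=
    (hi25.const_mul _).add (hi2.const_mul _)
  refine ⟨hint.congr_fun hreduce.symm measurableSet_Ioi, ?_⟩
  rw [setIntegral_congr_fun measurableSet_Ioi hreduce,
    integral_add (hi25.const_mul _) (hi2.const_mul _), integral_const_mul, integral_const_mul,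
    integral_add hi2 hi5, integral_Ioi_zpow_of_lt (by norm_num) ht0,
    integral_Ioi_zpow_of_lt (by norm_num) ht0]
  norm_num [zpow_neg]
  field_simp
end

section
/- Let μ₁, μ₂ be real numbers and W : ℝ → ℝ be given by W(λ) = (μ₁/2)(λ⁻⁴ + 2λ² − 3) + 2μ₂(λ² + 2λ⁻¹ − 3). Then the function λ ↦ W'(λ)/(λ³ − 1) is integrable on (1, ∞) and ∫₁^{∞} W'(λ)/(λ³ − 1) dλ = 4(μ₁ + μ₂) − (3/2)μ₁. -/
open Real MeasureTheory Set Filter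

/-- The critical dead load for the onset of cavitation in the two-term model
with exponents m = 1, n = −1/2: P₀ = ∫₁^∞ W'(λ)/(λ³−1) dλ = 4μ − 3μ₁/2 with
μ = μ₁ + μ₂. -/
theorem critical_deadload (μ₁ μ₂ : ℝ) (W : ℝ → ℝ)
    (hW : ∀ l : ℝ, W l = μ₁ / 2 * (l ^ (-4 : ℤ) + 2 * l ^ 2 - 3)
        + 2 * μ₂ * (l ^ 2 + 2 * l⁻¹ - 3)) :
    IntegrableOn (fun l => deriv W l / (l ^ 3 - 1)) (Ioi 1) ∧
    ∫ l in Ioi (1 : ℝ), deriv W l / (l ^ 3 - 1) = 4 * (μ₁ + μ₂) - 3 / 2 * μ₁ := by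
  have hWf : W = fun l : ℝ => μ₁ / 2 * (l ^ (-4 : ℤ) + 2 * l ^ 2 - 3)
      + 2 * μ₂ * (l ^ 2 + 2 * l⁻¹ - 3) := funext hW
  subst hWf
  have key : ∀ l ∈ Ioi (1:ℝ), (fun l => deriv (fun l : ℝ => μ₁ / 2 * (l ^ (-4 : ℤ) + 2 * l ^ 2 - 3)
      + 2 * μ₂ * (l ^ 2 + 2 * l⁻¹ - 3)) l / (l ^ 3 - 1)) l
      = (2*μ₁+4*μ₂) * l ^ (-2:ℝ) + 2*μ₁ * l ^ (-5:ℝ) := by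
    intro l hl
    have hl1 : (1:ℝ) < l := hl
    have hl0 : l ≠ 0 := by positivity
    have hlp : (0:ℝ) < l := by linarith
    have h1 : HasDerivAt (fun x:ℝ => x ^ (-4:ℤ)) ((-4:ℤ) * l ^ ((-4:ℤ)-1)) l :=
      hasDerivAt_zpow _ _ (Or.inl hl0)
    have h2 : HasDerivAt (fun x:ℝ => x ^ 2) ((2:ℕ) * l ^ (2-1)) l := hasDerivAt_pow 2 l
    have h3 : HasDerivAt (fun x:ℝ => x⁻¹) (-(l^2)⁻¹) l := hasDerivAt_inv hl0
    have hd : HasDerivAt (fun l : ℝ => μ₁ / 2 * (l ^ (-4 : ℤ) + 2 * l ^ 2 - 3)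
        + 2 * μ₂ * (l ^ 2 + 2 * l⁻¹ - 3))
        (μ₁/2 * (((-4:ℤ) * l ^ ((-4:ℤ)-1)) + 2 * ((2:ℕ) * l ^ (2-1)))
          + 2*μ₂ * (((2:ℕ) * l ^ (2-1)) + 2 * (-(l^2)⁻¹))) l := by
      exact (((h1.add (h2.const_mul 2)).sub_const 3).const_mul (μ₁/2)).add
        (((h2.add (h3.const_mul 2)).sub_const 3).const_mul (2*μ₂))
    simp only [hd.deriv]
    have e2 : l ^ (-2:ℝ) = (l ^ 2)⁻¹ := by
      rw [show (-2:ℝ) = ((-2:ℤ):ℝ) by norm_num, rpow_intCast, zpow_neg]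
      norm_cast
    have e5 : l ^ (-5:ℝ) = (l ^ 5)⁻¹ := by
      rw [show (-5:ℝ) = ((-5:ℤ):ℝ) by norm_num, rpow_intCast, zpow_neg]
      norm_cast
    have e4 : l ^ ((-4:ℤ)-1) = (l ^ 5)⁻¹ := by
      rw [show ((-4:ℤ)-1) = -5 by norm_num, zpow_neg]
      norm_cast
    rw [e2, e5, e4]
    have hcube : l ^ 3 - 1 ≠ 0 := by nlinarith
    field_simp
    ring
  have hg : IntegrableOn (fun l : ℝ => (2*μ₁+4*μ₂) * l ^ (-2:ℝ) + 2*μ₁ * l ^ (-5:ℝ)) (Ioi 1) := by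
    exact ((integrableOn_Ioi_rpow_of_lt (by norm_num : (-2:ℝ) < -1) one_pos).const_mul _).add
      ((integrableOn_Ioi_rpow_of_lt (by norm_num : (-5:ℝ) < -1) one_pos).const_mul _)
  constructor
  · exact hg.congr_fun (fun l hl => (key l hl).symm) measurableSet_Ioi
  · rw [setIntegral_congr_fun measurableSet_Ioi key]
    rw [integral_add ((integrableOn_Ioi_rpow_of_lt (by norm_num : (-2:ℝ) < -1) one_pos).const_mul _)
      ((integrableOn_Ioi_rpow_of_lt (by norm_num : (-5:ℝ) < -1) one_pos).const_mul _),
      integral_const_mul, integral_const_mul,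
      integral_Ioi_rpow_of_lt (by norm_num : (-2:ℝ) < -1) one_pos,
      integral_Ioi_rpow_of_lt (by norm_num : (-5:ℝ) < -1) one_pos]
    norm_num
    ring
end

section
/- Let μ₁ > 0 and μ₂ be real numbers with μ = μ₁ + μ₂ satisfying 0 < μ₁/μ < 4/3, and define P : ℝ → ℝ by P(c) = 2μ₁((1 + c³)^{1/3} + (1/4)(1 + c³)^{−2/3}) + 4μ₂(1 + c³)^{1/3}. Then P'(c) > 0 for every c > 0; in particular P is strictly increasing on (0, ∞), so the cavitation bifurcation is supercritical and the cavity radius increases monotonically with the applied dead load. -/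
open Real MeasureTheory Set Filter

/-- Supercritical (stable) cavitation for the two-term model: if μ₁ > 0 and
0 < μ₁/μ < 4/3, then the dead load P(c) has positive derivative for all c > 0,
and is strictly increasing on (0, ∞). -/
theorem stable_cavitation (μ₁ μ₂ μ : ℝ) (hμ : μ = μ₁ + μ₂) (hμ₁ : 0 < μ₁)
    (hratio1 : 0 < μ₁ / μ) (hratio2 : μ₁ / μ < 4 / 3) (P : ℝ → ℝ)
    (hP : ∀ c : ℝ, P c = 2 * μ₁ * ((1 + c ^ 3) ^ ((1 : ℝ) / 3)
        + (1 / 4) * (1 + c ^ 3) ^ (-(2 : ℝ) / 3))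
        + 4 * μ₂ * (1 + c ^ 3) ^ ((1 : ℝ) / 3)) :
    (∀ c : ℝ, 0 < c → 0 < deriv P c) ∧ StrictMonoOn P (Ioi 0) := by
  have hPfun : P = fun c => 2 * μ₁ * ((1 + c ^ 3) ^ ((1 : ℝ) / 3)
        + (1 / 4) * (1 + c ^ 3) ^ (-(2 : ℝ) / 3))
        + 4 * μ₂ * (1 + c ^ 3) ^ ((1 : ℝ) / 3) := funext hP
  have hμpos : 0 < μ := by
    rcases div_pos_iff.mp hratio1 with ⟨_, h⟩ | ⟨h, _⟩
    · exact h
    · linarith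
  have hμ₁lt : μ₁ < 4 / 3 * μ := by
    have := (div_lt_iff₀ hμpos).mp hratio2
    linarith
  have key : ∀ c : ℝ, 0 < c → HasDerivAt P
      (2 * μ₁ * (3 * c ^ 2 * ((1 : ℝ) / 3) * (1 + c ^ 3) ^ ((1 : ℝ) / 3 - 1)
        + 1 / 4 * (3 * c ^ 2 * (-(2 : ℝ) / 3) * (1 + c ^ 3) ^ (-(2 : ℝ) / 3 - 1)))
        + 4 * μ₂ * (3 * c ^ 2 * ((1 : ℝ) / 3) * (1 + c ^ 3) ^ ((1 : ℝ) / 3 - 1))) c := by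
    intro c hc
    have hu : (0:ℝ) < 1 + c ^ 3 := by positivity
    have hbase : HasDerivAt (fun c : ℝ => 1 + c ^ 3) (3 * c ^ 2) c := by
      simpa using (hasDerivAt_pow 3 c).const_add 1
    have hA : HasDerivAt (fun c : ℝ => (1 + c ^ 3) ^ ((1 : ℝ) / 3))
        (3 * c ^ 2 * ((1 : ℝ) / 3) * (1 + c ^ 3) ^ ((1 : ℝ) / 3 - 1)) c :=
      hbase.rpow_const (Or.inl hu.ne')
    have hB : HasDerivAt (fun c : ℝ => (1 + c ^ 3) ^ (-(2 : ℝ) / 3))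
        (3 * c ^ 2 * (-(2 : ℝ) / 3) * (1 + c ^ 3) ^ (-(2 : ℝ) / 3 - 1)) c :=
      hbase.rpow_const (Or.inl hu.ne')
    rw [hPfun]
    exact ((hA.add (hB.const_mul (1/4))).const_mul (2 * μ₁)).add
      (hA.const_mul (4 * μ₂))
  have hpos : ∀ c : ℝ, 0 < c →
      0 < 2 * μ₁ * (3 * c ^ 2 * ((1 : ℝ) / 3) * (1 + c ^ 3) ^ ((1 : ℝ) / 3 - 1)
        + 1 / 4 * (3 * c ^ 2 * (-(2 : ℝ) / 3) * (1 + c ^ 3) ^ (-(2 : ℝ) / 3 - 1)))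
        + 4 * μ₂ * (3 * c ^ 2 * ((1 : ℝ) / 3) * (1 + c ^ 3) ^ ((1 : ℝ) / 3 - 1)) := by
    intro c hc
    have hu : (0:ℝ) < 1 + c ^ 3 := by positivity
    have hc3 : (0:ℝ) < c ^ 3 := by positivity
    have hu1 : (1:ℝ) < 1 + c ^ 3 := by linarith
    have e1 : (1 : ℝ) / 3 - 1 = -(2:ℝ)/3 := by norm_num
    have e2 : -(2 : ℝ) / 3 - 1 = -(5:ℝ)/3 := by norm_num
    have e3 : (1 + c ^ 3) ^ (-(2:ℝ)/3) = (1 + c ^ 3) * (1 + c ^ 3) ^ (-(5:ℝ)/3) := by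
      rw [show (-(2:ℝ)/3) = 1 + (-(5:ℝ)/3) by norm_num, rpow_add hu, rpow_one]
    rw [e1, e2, e3]
    have ht : (0:ℝ) < (1 + c ^ 3) ^ (-(5:ℝ)/3) := rpow_pos_of_pos hu _
    set u := 1 + c ^ 3
    set t := u ^ (-(5:ℝ)/3)
    have expand : 2 * μ₁ * (3 * c ^ 2 * ((1:ℝ) / 3) * (u * t)
        + 1 / 4 * (3 * c ^ 2 * (-(2:ℝ) / 3) * t))
        + 4 * μ₂ * (3 * c ^ 2 * ((1:ℝ) / 3) * (u * t))
        = c ^ 2 * t * ((2 * μ₁ + 4 * μ₂) * u - μ₁) := by ring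
    rw [expand]
    have hc2 : (0:ℝ) < c ^ 2 := by positivity
    have hlast : 0 < (2 * μ₁ + 4 * μ₂) * u - μ₁ := by nlinarith
    positivity
  constructor
  · intro c hc
    rw [(key c hc).deriv]
    exact hpos c hc
  · apply strictMonoOn_of_deriv_pos (convex_Ioi 0)
    · intro c hc
      exact ((key c hc).continuousAt).continuousWithinAt
    · intro c hc
      rw [interior_Ioi] at hc
      rw [(key c hc).deriv]
      exact hpos c hc
end

section
/- Let μ₁ > 0 and μ₂ be real numbers with μ = μ₁ + μ₂ satisfying 4/3 < μ₁/μ < 2, and define P : ℝ → ℝ by P(c) = 2μ₁((1 + c³)^{1/3} + (1/4)(1 + c³)^{−2/3}) + 4μ₂(1 + c³)^{1/3}. Then P'(c) < 0 for every c > 0 with c³ < (3μ₁ − 4μ)/(2(2μ − μ₁)); in particular there exists δ > 0 such that P'(c) < 0 for all c ∈ (0, δ), so the cavitation bifurcation is subcritical (unstable snap cavitation) even though the Baker–Ericksen inequalities hold. -/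
open Real Set

/-! With `u = 1 + c³` the load is `a u^{1/3} + b u^{-2/3}`, whose derivative factors as
`c² u^{-5/3} (a u - 2b)`. Here `a = 4μ - 2μ₁` and `b = μ₁/2`, so `P'(c) < 0`
exactly when `2(2μ - μ₁) c³ < 3μ₁ - 4μ`. The ratio bounds `4/3 < μ₁/μ < 2` (with `μ₁ > 0`,
forcing `μ > 0`) make both `2μ - μ₁` and `3μ₁ - 4μ` positive, so this holds for all small `c > 0`. -/

noncomputable def cavityLoad (a b c : ℝ) : ℝ :=
  a * (1 + c ^ 3) ^ ((1 : ℝ) / 3) + b * (1 + c ^ 3) ^ (-(2 : ℝ) / 3)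

theorem hasDerivAt_cavityLoad (a b : ℝ) {c : ℝ} (hc : 0 < 1 + c ^ 3) :
    HasDerivAt (cavityLoad a b)
      (c ^ 2 * (1 + c ^ 3) ^ (-(5 : ℝ) / 3) * (a * (1 + c ^ 3) - 2 * b)) c := by
  have hu : HasDerivAt (fun x : ℝ => 1 + x ^ 3) (3 * c ^ 2) c := by
    simpa using (hasDerivAt_pow 3 c).const_add 1
  have hd := ((hu.rpow_const (p := (1 : ℝ) / 3) (Or.inl hc.ne')).const_mul a).add
    ((hu.rpow_const (p := -(2 : ℝ) / 3) (Or.inl hc.ne')).const_mul b)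
  have hexp : (1 + c ^ 3) ^ ((1 : ℝ) / 3 - 1) = (1 + c ^ 3) * (1 + c ^ 3) ^ (-(5 : ℝ) / 3) := by
    rw [show (1 : ℝ) / 3 - 1 = 1 + -(5 : ℝ) / 3 by norm_num, rpow_add hc, rpow_one]
  rw [hexp, show -(2 : ℝ) / 3 - 1 = -(5 : ℝ) / 3 by norm_num] at hd
  exact hd.congr_deriv (by ring)

theorem deriv_cavityLoad_neg {a b c : ℝ} (hc : 0 < c) (hab : a * (1 + c ^ 3) < 2 * b) :
    deriv (cavityLoad a b) c < 0 := by
  have hu : 0 < 1 + c ^ 3 := by positivity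
  rw [(hasDerivAt_cavityLoad a b hu).deriv]
  exact mul_neg_of_pos_of_neg (by positivity) (by linarith)

theorem exists_pos_forall_mem_Ioo_pow_lt {T : ℝ} (hT : 0 < T) {n : ℕ} (hn : n ≠ 0) :
    ∃ δ > 0, ∀ c ∈ Ioo (0 : ℝ) δ, c ^ n < T := by
  refine ⟨min 1 T, lt_min one_pos hT, fun c ⟨hc0, hcδ⟩ => ?_⟩
  calc c ^ n ≤ c := pow_le_of_le_one hc0.le (hcδ.le.trans (min_le_left _ _)) hn
    _ < T := hcδ.trans_le (min_le_right _ _)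

/-- Subcritical (unstable snap) cavitation for the two-term model: if μ₁ > 0
and 4/3 < μ₁/μ < 2 (so the Baker–Ericksen inequalities hold), then the dead
load P(c) has negative derivative for all c > 0 with
c³ < (3μ₁ − 4μ)/(2(2μ − μ₁)); in particular P′ < 0 on some interval (0, δ). -/
theorem snap_cavitation (μ₁ μ₂ μ : ℝ) (hμ : μ = μ₁ + μ₂) (hμ₁ : 0 < μ₁)
    (hratio1 : 4 / 3 < μ₁ / μ) (hratio2 : μ₁ / μ < 2) (P : ℝ → ℝ)
    (hP : ∀ c : ℝ, P c = 2 * μ₁ * ((1 + c ^ 3) ^ ((1 : ℝ) / 3)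
        + (1 / 4) * (1 + c ^ 3) ^ (-(2 : ℝ) / 3))
        + 4 * μ₂ * (1 + c ^ 3) ^ ((1 : ℝ) / 3)) :
    (∀ c : ℝ, 0 < c → c ^ 3 < (3 * μ₁ - 4 * μ) / (2 * (2 * μ - μ₁)) →
      deriv P c < 0) ∧
    ∃ δ > 0, ∀ c ∈ Ioo (0 : ℝ) δ, deriv P c < 0 := by
  have hμpos : 0 < μ := by
    by_contra! h
    linarith [div_nonpos_of_nonneg_of_nonpos hμ₁.le h]
  have hden : 0 < 2 * (2 * μ - μ₁) := by linarith [(div_lt_iff₀ hμpos).mp hratio2]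
  have hnum : 0 < 3 * μ₁ - 4 * μ := by linarith [(lt_div_iff₀ hμpos).mp hratio1]
  have hPload : P = cavityLoad (4 * μ - 2 * μ₁) (μ₁ / 2) := by
    funext c
    rw [hP, cavityLoad, hμ]
    ring
  have hsmall : ∀ c : ℝ, 0 < c → c ^ 3 < (3 * μ₁ - 4 * μ) / (2 * (2 * μ - μ₁)) →
      deriv P c < 0 := by
    intro c hc hc3
    rw [hPload]
    refine deriv_cavityLoad_neg hc ?_
    linarith [(lt_div_iff₀ hden).mp hc3]
  obtain ⟨δ, hδ, hδT⟩ := exists_pos_forall_mem_Ioo_pow_lt (div_pos hnum hden) three_ne_zero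
  exact ⟨hsmall, δ, hδ, fun c hc => hsmall c hc.1 (hδT c hc)⟩
end
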